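/- arXiv:1311.3539 — 2 statements merged into one kernel-verified Lean document; each statement's English description precedes it below -/
import Mathlib

section
/- Let G be a monotone function from sets of sentences to sets of sentences that maps consistent sets to consistent sets. If V is consistent and sound (V ⊆ G(V)), then there exists a smallest consistent fixed point of G containing V. -/
/-!
Zorn's lemma applied to the consistent sound sets containing `V` (a chain of them has a
consistent sound union) gives a maximal one `M`; since `G M` is again consistent and sound and
contains `M`, maximality forces `G M = M`. The least fixed point of `G` above `V`, which exists
by Knaster–Tarski, lies inside `M` and is therefore consistent.
-/

def Consistent {S : Type*} (neg : S → S) (U : Set S) : Prop :=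
  ¬ ∃ A, A ∈ U ∧ neg A ∈ U

section

variable {S : Type*} {neg : S → S}

theorem Consistent.mono {U W : Set S} (hW : Consistent neg W) (hUW : U ⊆ W) :
    Consistent neg U :=
  fun ⟨A, hA, hnA⟩ => hW ⟨A, hUW hA, hUW hnA⟩

theorem IsChain.consistent_sUnion {c : Set (Set S)} (hc : IsChain (· ⊆ ·) c)
    (hcons : ∀ U ∈ c, Consistent neg U) : Consistent neg (⋃₀ c) := by
  rintro ⟨A, ⟨U₁, hU₁, hA⟩, ⟨U₂, hU₂, hnA⟩⟩
  rcases hc.total hU₁ hU₂ with h | h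
  · exact hcons U₂ hU₂ ⟨A, h hA, hnA⟩
  · exact hcons U₁ hU₁ ⟨A, hA, h hnA⟩

theorem exists_superset_maximal_consistent_sound {G : Set S → Set S} (hmono : Monotone G)
    {V : Set S} (hVcons : Consistent neg V) (hVsound : V ⊆ G V) :
    ∃ M, V ⊆ M ∧ Maximal (fun W => Consistent neg W ∧ W ⊆ G W) M := by
  refine zorn_subset_nonempty {W | Consistent neg W ∧ W ⊆ G W} ?_ V ⟨hVcons, hVsound⟩
  intro c hc hchain _
  refine ⟨⋃₀ c, ⟨hchain.consistent_sUnion fun U hU => (hc hU).1, ?_⟩,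
    fun U hU => Set.subset_sUnion_of_mem hU⟩
  rintro A ⟨U, hU, hA⟩
  exact hmono (Set.subset_sUnion_of_mem hU) ((hc hU).2 hA)

theorem Maximal.map_eq_of_consistent_sound {G : Set S → Set S} (hmono : Monotone G)
    (hG : ∀ U, Consistent neg U → Consistent neg (G U)) {M : Set S}
    (hM : Maximal (fun W => Consistent neg W ∧ W ⊆ G W) M) : G M = M :=
  (hM.eq_of_subset ⟨hG M hM.prop.1, hmono hM.prop.2⟩ hM.prop.2).symm

end

theorem smallest_consistent_fixed_point_above {S : Type*} (neg : S → S)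
    (G : Set S → Set S) (hmono : Monotone G)
    (hG : ∀ U, Consistent neg U → Consistent neg (G U))
    (V : Set S) (hVcons : Consistent neg V) (hVsound : V ⊆ G V) :
    ∃ U, Consistent neg U ∧ G U = U ∧ V ⊆ U ∧
      ∀ W, Consistent neg W → G W = W → V ⊆ W → U ⊆ W := by
  obtain ⟨M, hVM, hM⟩ := exists_superset_maximal_consistent_sound hmono hVcons hVsound
  let f : Set S →o Set S := ⟨G, hmono⟩
  have least_fixed_above : ∀ W, G W = W → V ⊆ W → ↑(f.nextFixed V hVsound) ⊆ W :=
    fun W hW hVW => f.nextFixed_le hVsound (y := ⟨W, hW⟩) hVW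
  refine ⟨f.nextFixed V hVsound, ?_, (f.nextFixed V hVsound).2, f.le_nextFixed hVsound,
    fun W _ => least_fixed_above W⟩
  exact hM.prop.1.mono (least_fixed_above M (hM.map_eq_of_consistent_sound hmono hG) hVM)
end

section
/- Let G be a monotone function on sets of sentences preserving consistency, and let W be a consistent set. Then the equation V = W ∩ G(V) has a greatest consistent solution V, and this V is the greatest sound consistent set contained in W. -/
theorem Consistent.mono_s6 {S : Type*} {neg : S → S} {U V : Set S} (hV : Consistent neg V)
    (hUV : U ⊆ V) : Consistent neg U :=
  fun ⟨A, hA, hnA⟩ => hV ⟨A, hUV hA, hUV hnA⟩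

section Restricted

variable {S : Type*} {G : Set S → Set S}

def restrictedTo (W : Set S) (hmono : Monotone G) : Set S →o Set S where
  toFun U := W ∩ G U
  monotone' _ _ h := Set.inter_subset_inter_right W (hmono h)

theorem subset_restrictedTo_iff {W U : Set S} (hmono : Monotone G) :
    U ⊆ restrictedTo W hmono U ↔ U ⊆ G U ∧ U ⊆ W :=
  Set.subset_inter_iff.trans and_comm

end Restricted

theorem greatest_solution_eq_greatest_sound_general {S : Type*} (neg : S → S)
    (G : Set S → Set S) (hmono : Monotone G)
    (W : Set S) (hW : Consistent neg W) :
    ∃ V, Consistent neg V ∧ V = W ∩ G V ∧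
      (∀ V', Consistent neg V' → V' = W ∩ G V' → V' ⊆ V) ∧
      (V ⊆ G V ∧ V ⊆ W ∧
        ∀ V', Consistent neg V' → V' ⊆ G V' → V' ⊆ W → V' ⊆ V) := by
  set F := restrictedTo W hmono
  have hfix : F.gfp = W ∩ G F.gfp := F.map_gfp.symm
  obtain ⟨hsound, hsubW⟩ := (subset_restrictedTo_iff hmono).1 hfix.subset
  refine ⟨F.gfp, hW.mono_s6 hsubW, hfix, fun V' _ hV' => F.le_gfp hV'.subset, hsound, hsubW, ?_⟩
  exact fun V' _ hG' hW' => F.le_gfp ((subset_restrictedTo_iff hmono).2 ⟨hG', hW'⟩)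

theorem greatest_solution_eq_greatest_sound {S : Type*} (neg : S → S)
    (G : Set S → Set S) (hmono : Monotone G)
    (hG : ∀ U, Consistent neg U → Consistent neg (G U))
    (W : Set S) (hW : Consistent neg W) :
    ∃ V, Consistent neg V ∧ V = W ∩ G V ∧
      (∀ V', Consistent neg V' → V' = W ∩ G V' → V' ⊆ V) ∧
      (V ⊆ G V ∧ V ⊆ W ∧
        ∀ V', Consistent neg V' → V' ⊆ G V' → V' ⊆ W → V' ⊆ V) :=
  greatest_solution_eq_greatest_sound_general neg G hmono W hW
end
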